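/- arXiv:1310.3723 — 8 statements merged into one kernel-verified Lean document; each statement's English description precedes it below -/
import Mathlib

section
/- The purge function is idempotent when all filter functions only depend on the purged prefix: if for every edge (d, f, π) and sequences α, β with purge_π(α) = purge_π(β) we have f(α·a) = f(β·a) for all actions a, then purge_π(purge_π(α)) = purge_π(α) for all α. -/
open scoped Classical

/-- A security policy over domains `D` and actions `A`: a flow relation between
domains, optional filter functions labeling edges, and a domain assignment. -/
structure Policy (D A : Type) where
  flows : D → D → Prop
  filt : D → D → Option (List A → Bool)
  dom : A → D

/-- Action `a` is visible to domain `π` after the prefix `α`: the domain of `a`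
flows to `π` and any filter on the edge evaluates to true on `α·a`. -/
def Policy.visible {D A : Type} (P : Policy D A) (π : D) (α : List A) (a : A) : Prop :=
  P.flows (P.dom a) π ∧ ∀ f ∈ P.filt (P.dom a) π, f (α ++ [a]) = true

/-- Helper for `purge`: `pre` is the prefix of actions already processed. -/
noncomputable def Policy.purgeFrom {D A : Type} (P : Policy D A) (π : D) :
    List A → List A → List A
  | _, [] => []
  | pre, a :: rest =>
      (if P.visible π pre a then [a] else []) ++ P.purgeFrom π (pre ++ [a]) rest

/-- The purge function: `purge π ε = ε`; `purge π (α·a) = purge π α · a` if `a`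
is visible to `π` after `α`, and `purge π (α·a) = purge π α` otherwise. -/
noncomputable def Policy.purge {D A : Type} (P : Policy D A) (π : D) (α : List A) : List A :=
  P.purgeFrom π [] α

namespace Policy

variable {D A : Type} (P : Policy D A) (π : D)

def FiltersFactorThroughPurge : Prop :=
  ∀ (d : D) (f : List A → Bool), P.flows d π → P.filt d π = some f →
    ∀ α β : List A, P.purge π α = P.purge π β → ∀ a : A, f (α ++ [a]) = f (β ++ [a])

theorem purgeFrom_append (pre α β : List A) :
    P.purgeFrom π pre (α ++ β) = P.purgeFrom π pre α ++ P.purgeFrom π (pre ++ α) β := by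
  induction α generalizing pre with
  | nil => simp [purgeFrom]
  | cons a rest ih => simp [purgeFrom, ih]

theorem purge_append_singleton (α : List A) (a : A) :
    P.purge π (α ++ [a]) = P.purge π α ++ if P.visible π α a then [a] else [] := by
  simp [purge, purgeFrom_append, purgeFrom]

variable {P π}

theorem FiltersFactorThroughPurge.visible_congr (hfilt : P.FiltersFactorThroughPurge π)
    {α β : List A} (h : P.purge π α = P.purge π β) (a : A) :
    P.visible π α a ↔ P.visible π β a :=
  and_congr_right fun hflow => forall₂_congr fun f hf => by rw [hfilt _ f hflow hf α β h a]

theorem FiltersFactorThroughPurge.purge_purge (hfilt : P.FiltersFactorThroughPurge π)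
    (α : List A) : P.purge π (P.purge π α) = P.purge π α := by
  induction α using List.reverseRecOn with
  | nil => rfl
  | append_singleton α a ih =>
    rw [purge_append_singleton]
    by_cases hv : P.visible π α a
    · have hv' : P.visible π (P.purge π α) a := (hfilt.visible_congr ih a).mpr hv
      rw [if_pos hv, purge_append_singleton, ih, if_pos hv']
    · rw [if_neg hv, List.append_nil, ih]

end Policy

/-- purge is idempotent when all filter functions only depend on
the purged prefix. -/
theorem purge_idem {D A : Type} (P : Policy D A) (π : D)
    (hfilt : ∀ (d : D) (f : List A → Bool), P.flows d π → P.filt d π = some f →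
      ∀ α β : List A, P.purge π α = P.purge π β →
        ∀ a : A, f (α ++ [a]) = f (β ++ [a])) :
    ∀ α : List A, P.purge π (P.purge π α) = P.purge π α :=
  Policy.FiltersFactorThroughPurge.purge_purge hfilt
end

section
/- Unwinding theorem without filters: if a machine M admits a family of equivalence relations {∼_π}_{π∈D} satisfying output consistency (s ∼_π t implies obs(π,s) = obs(π,t)), step consistency (s ∼_π t implies step(s,a) ∼_π step(t,a) for all actions a), and local respect (dom(a) does not flow to π implies s ∼_π step(s,a)), then for all executions α, β: purge_π(α) = purge_π(β) implies obs_π(s⁰·α) = obs_π(s⁰·β). -/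
open scoped Classical

theorem Policy.purgeFrom_eq_filter {D A : Type} (flows : D → D → Prop) (dom : A → D) (π : D) :
    ∀ pre α : List A, (Policy.mk flows (fun _ _ => none) dom).purgeFrom π pre α
      = α.filter (fun a => flows (dom a) π)
  | _, [] => rfl
  | pre, a :: α => by
    by_cases ha : flows (dom a) π <;>
      simp [Policy.purgeFrom, Policy.visible, ha, Policy.purgeFrom_eq_filter flows dom π _ α]

theorem Policy.purge_eq_filter {D A : Type} (flows : D → D → Prop) (dom : A → D) (π : D)
    (α : List A) :
    (Policy.mk flows (fun _ _ => none) dom).purge π α = α.filter (fun a => flows (dom a) π) :=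
  Policy.purgeFrom_eq_filter flows dom π [] α

/-- A step kept by the filter is matched on both sides (step consistency); a dropped one is
absorbed on the left (local respect). -/
theorem foldl_rel_foldl_filter {S A : Type} {step : S → A → S} {r : S → S → Prop}
    {p : A → Prop} [DecidablePred p] (hr : Equivalence r)
    (hstep : ∀ s t a, r s t → r (step s a) (step t a)) (hinv : ∀ a s, ¬ p a → r s (step s a)) :
    ∀ (α : List A) {s t : S}, r s t →
      r (α.foldl step s) ((α.filter (fun a => p a)).foldl step t)
  | [], _, _, hst => hst
  | a :: α, s, t, hst => by
    by_cases ha : p a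
    · simpa [ha] using foldl_rel_foldl_filter hr hstep hinv α (hstep s t a hst)
    · simpa [ha] using
        foldl_rel_foldl_filter hr hstep hinv α (hr.trans (hr.symm (hinv a s ha)) hst)

theorem unwinding_no_filters_general {S A D O : Type}
    (step : S → A → S) (s0 : S) (dom : A → D) (flows : D → D → Prop)
    (obs : D → S → O) (sim : D → S → S → Prop)
    (hequiv : ∀ π : D, Equivalence (sim π))
    (OC : ∀ (π : D) (s t : S), sim π s t → obs π s = obs π t)
    (SC : ∀ (π : D) (s t : S) (a : A), sim π s t → sim π (step s a) (step t a))
    (LR : ∀ (π : D) (a : A) (s : S), ¬ flows (dom a) π → sim π s (step s a))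
    (π : D) (α β : List A)
    (h : (Policy.mk flows (fun _ _ => none) dom).purge π α
       = (Policy.mk flows (fun _ _ => none) dom).purge π β) :
    obs π (List.foldl step s0 α) = obs π (List.foldl step s0 β) := by
  have unwind := foldl_rel_foldl_filter (hequiv π) (SC π) (LR π)
  rw [Policy.purge_eq_filter, Policy.purge_eq_filter] at h
  refine OC π _ _ ((hequiv π).trans (unwind α ((hequiv π).refl s0)) ?_)
  rw [h]
  exact (hequiv π).symm (unwind β ((hequiv π).refl s0))

/-- unwinding theorem without filters. If a machine admits a
family of equivalence relations satisfying output consistency, step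
consistency, and local respect, then equal purges imply equal observations. -/
theorem unwinding_no_filters {S A D O : Type}
    (step : S → A → S) (s0 : S) (dom : A → D) (flows : D → D → Prop)
    (hrefl : ∀ d : D, flows d d)
    (obs : D → S → O) (sim : D → S → S → Prop)
    (hequiv : ∀ π : D, Equivalence (sim π))
    (OC : ∀ (π : D) (s t : S), sim π s t → obs π s = obs π t)
    (SC : ∀ (π : D) (s t : S) (a : A), sim π s t → sim π (step s a) (step t a))
    (LR : ∀ (π : D) (a : A) (s : S), ¬ flows (dom a) π → sim π s (step s a))
    (π : D) (α β : List A)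
    (h : (Policy.mk flows (fun _ _ => none) dom).purge π α
       = (Policy.mk flows (fun _ _ => none) dom).purge π β) :
    obs π (List.foldl step s0 α) = obs π (List.foldl step s0 β) :=
  unwinding_no_filters_general step s0 dom flows obs sim hequiv OC SC LR π α β h
end

section
/- Unwinding theorem with filter functions: if a machine M admits equivalence relations {∼_π}_{π∈D} satisfying output consistency, step consistency, local respect (if dom(a) ⤳̸ π, or the edge from dom(a) to π carries filter f with f(α·a) = false where α·a is a valid execution ending in state s, then s ∼_π step(s,a)), then for all valid executions α, β with purge_π(α) = purge_π(β), we have obs_π(s⁰·α) = obs_π(s⁰·β). -/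
open scoped Classical

/-- Partial run function: the state reached from `s` by executing a sequence
of actions, `none` if some action along the way is not executable. -/
def runP {S A : Type} (step : S → A → Option S) : S → List A → Option S
  | s, [] => some s
  | s, a :: rest => (step s a).bind (fun s' => runP step s' rest)

/-!
Induct on `|α| + |β|`, carrying the already executed prefixes along, since filters make
visibility depend on the whole history. An action invisible to `π` is absorbed on its own
side by local respect; otherwise both sides start with the same visible action, and step
consistency keeps the two states `∼_π`-related. Every state met along the way is reached
from `s⁰` by a valid execution, as local respect requires.
-/

section Run

variable {S A : Type} (step : S → A → Option S)

theorem runP_append (l₁ l₂ : List A) (s : S) :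
    runP step s (l₁ ++ l₂) = (runP step s l₁).bind (runP step · l₂) := by
  induction l₁ generalizing s with
  | nil => rfl
  | cons a l₁ ih => simp only [List.cons_append, runP, Option.bind_assoc, ih]

theorem exists_step_of_runP_cons {s₀ s u : S} {pre l : List A} {a : A}
    (hpre : runP step s₀ pre = some s) (hrun : runP step s (a :: l) = some u) :
    ∃ s', step s a = some s' ∧ runP step s₀ (pre ++ [a]) = some s' ∧
      runP step s' l = some u := by
  obtain ⟨s', hs', hl⟩ := Option.bind_eq_some_iff.mp hrun
  exact ⟨s', hs', by simp [runP_append, hpre, runP, hs'], hl⟩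

end Run

namespace Policy

variable {D A : Type} (P : Policy D A) (π : D)

theorem purgeFrom_cons_of_visible {pre : List A} {a : A} (l : List A)
    (ha : P.visible π pre a) : P.purgeFrom π pre (a :: l) = a :: P.purgeFrom π (pre ++ [a]) l := by
  simp [purgeFrom, ha]

theorem purgeFrom_cons_of_not_visible {pre : List A} {a : A} (l : List A)
    (ha : ¬ P.visible π pre a) : P.purgeFrom π pre (a :: l) = P.purgeFrom π (pre ++ [a]) l := by
  simp [purgeFrom, ha]

end Policy

section Unwinding

variable {S A D : Type} {step : S → A → Option S} {s₀ : S} {P : Policy D A}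
  {sim : D → S → S → Prop} {π : D}

theorem sim_of_purgeFrom_eq (hequiv : Equivalence (sim π))
    (SC : ∀ (s t : S) (a : A) (s' t' : S),
      sim π s t → step s a = some s' → step t a = some t' → sim π s' t')
    (LR : ∀ (α : List A) (a : A) (s s' : S),
      runP step s₀ α = some s → step s a = some s' → ¬ P.visible π α a → sim π s s') :
    ∀ (α β preα preβ : List A) {s t sα sβ : S},
      runP step s₀ preα = some s → runP step s₀ preβ = some t →
      runP step s α = some sα → runP step t β = some sβ →
      P.purgeFrom π preα α = P.purgeFrom π preβ β → sim π s t → sim π sα sβ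
  | [], [], _, _, _, _, _, _, _, _, hα, hβ, _, hst => by
    cases hα; cases hβ; exact hst
  | [], b :: β, preα, preβ, s, t, sα, sβ, hs, ht, hα, hβ, hpurge, hst => by
    obtain ⟨t', ht', ht'β, hβ'⟩ := exists_step_of_runP_cons step ht hβ
    have hb : ¬ P.visible π preβ b := fun hb => by
      rw [P.purgeFrom_cons_of_visible π β hb] at hpurge
      simp [Policy.purgeFrom] at hpurge
    rw [P.purgeFrom_cons_of_not_visible π β hb] at hpurge
    exact sim_of_purgeFrom_eq hequiv SC LR [] β preα (preβ ++ [b]) hs ht'β hα hβ' hpurge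
      (hequiv.trans hst (LR preβ b t t' ht ht' hb))
  | a :: α, β, preα, preβ, s, t, sα, sβ, hs, ht, hα, hβ, hpurge, hst => by
    obtain ⟨s', hs', hs'α, hα'⟩ := exists_step_of_runP_cons step hs hα
    by_cases ha : P.visible π preα a
    · rw [P.purgeFrom_cons_of_visible π α ha] at hpurge
      cases β with
      | nil => simp [Policy.purgeFrom] at hpurge
      | cons b β =>
        obtain ⟨t', ht', ht'β, hβ'⟩ := exists_step_of_runP_cons step ht hβ
        by_cases hb : P.visible π preβ b
        · rw [P.purgeFrom_cons_of_visible π β hb, List.cons.injEq] at hpurge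
          obtain ⟨rfl, hpurge⟩ := hpurge
          exact sim_of_purgeFrom_eq hequiv SC LR α β (preα ++ [a]) (preβ ++ [a]) hs'α ht'β
            hα' hβ' hpurge (SC s t a s' t' hst hs' ht')
        · rw [P.purgeFrom_cons_of_not_visible π β hb,
            ← P.purgeFrom_cons_of_visible π α ha] at hpurge
          exact sim_of_purgeFrom_eq hequiv SC LR (a :: α) β preα (preβ ++ [b]) hs ht'β hα hβ'
            hpurge (hequiv.trans hst (LR preβ b t t' ht ht' hb))
    · rw [P.purgeFrom_cons_of_not_visible π α ha] at hpurge
      exact sim_of_purgeFrom_eq hequiv SC LR α β (preα ++ [a]) preβ hs'α ht hα' hβ hpurge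
        (hequiv.trans (hequiv.symm (LR preα a s s' hs hs' ha)) hst)
termination_by α β => α.length + β.length

end Unwinding

/-- unwinding theorem with filter functions, for a machine with a
partial step function: output consistency, step consistency and local respect
(with filters, on valid executions) imply that valid executions with equal
purges yield equal observations. -/
theorem unwinding_filters {S A D O : Type}
    (step : S → A → Option S) (s0 : S) (P : Policy D A)
    (obs : D → S → O) (sim : D → S → S → Prop)
    (hequiv : ∀ π : D, Equivalence (sim π))
    (OC : ∀ (π : D) (s t : S), sim π s t → obs π s = obs π t)
    (SC : ∀ (π : D) (s t : S) (a : A) (s' t' : S),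
      sim π s t → step s a = some s' → step t a = some t' → sim π s' t')
    (LR : ∀ (π : D) (α : List A) (a : A) (s s' : S),
      runP step s0 α = some s → step s a = some s' →
      ¬ P.visible π α a → sim π s s')
    (π : D) (α β : List A) (sα sβ : S)
    (hα : runP step s0 α = some sα) (hβ : runP step s0 β = some sβ)
    (h : P.purge π α = P.purge π β) :
    obs π sα = obs π sβ :=
  OC π sα sβ <| sim_of_purgeFrom_eq (hequiv π) (SC π) (LR π) α β [] [] rfl rfl hα hβ h
    ((hequiv π).refl s0)
end

section
/- A distributed machine complies with its implicit security policy: for every process π_i and all global executions α, β, if purge_{π_i}(α) = purge_{π_i}(β) then obs_{π_i}(s⁰·α) = obs_{π_i}(s⁰·β), where the implicit policy has an edge π_i ⤳ π_j exactly when some message sent by π_i is received by π_j (plus reflexive edges). -/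
open scoped Classical

/-- Actions of a distributed machine: sending a message, or a reception of a
message by a given process. -/
inductive Act (ι M : Type) : Type
  | send : M → Act ι M
  | recv : ι → M → Act ι M

/-- The message underlying an action. -/
def Act.msg {ι M : Type} : Act ι M → M
  | .send m => m
  | .recv _ m => m

/-- A distributed machine: a family of processes indexed by `ι`, with local
states in `S`, messages in `M`, a unique sender for each message, input sets,
and partial local transition functions. -/
structure DM (ι S M : Type) where
  init : ι → S
  sender : M → ι
  isInput : ι → M → Bool
  stepL : ι → S → Act ι M → Option S

/-- The security domain of an action: the sender of its message. -/
def DM.dom {ι S M : Type} (D : DM ι S M) : Act ι M → ι :=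
  fun a => D.sender a.msg

/-- The process executing an action (`A_i^in ∪ A_i^out` membership). -/
def DM.actOf {ι S M : Type} (D : DM ι S M) : Act ι M → ι
  | .send m => D.sender m
  | .recv j _ => j

/-- Global step of the distributed machine. Sending a message advances the
sender's local state and appends the message to the buffer of each receiver;
receiving removes the first consumable occurrence of the message from the
receiver's buffer and advances its local state. -/
inductive DM.GStep {ι S M : Type} (D : DM ι S M) :
    (ι → S × List M) → Act ι M → (ι → S × List M) → Prop
  | send (q : ι → S × List M) (m : M) (s' : S)
      (hs : D.stepL (D.sender m) (q (D.sender m)).1 (.send m) = some s') :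
      D.GStep q (.send m)
        (fun j => (if j = D.sender m then s' else (q j).1,
                   if D.isInput j m then (q j).2 ++ [m] else (q j).2))
  | recv (q : ι → S × List M) (i : ι) (m : M) (s' : S) (α₁ α₂ : List M)
      (hin : D.isInput i m = true)
      (hbuf : (q i).2 = α₁ ++ m :: α₂)
      (hfirst : ∀ b ∈ α₁, D.stepL i (q i).1 (.recv i b) = none)
      (hs : D.stepL i (q i).1 (.recv i m) = some s') :
      D.GStep q (.recv i m) (Function.update q i (s', α₁ ++ α₂))

/-- Valid global executions: `D.Run q α q'` means the sequence `α` is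
executable from global state `q` and leads to `q'`. -/
inductive DM.Run {ι S M : Type} (D : DM ι S M) :
    (ι → S × List M) → List (Act ι M) → (ι → S × List M) → Prop
  | nil (q : ι → S × List M) : D.Run q [] q
  | cons {q q' q'' : ι → S × List M} {a : Act ι M} {α : List (Act ι M)} :
      D.GStep q a q' → D.Run q' α q'' → D.Run q (a :: α) q''

/-- Initial global state: every process in its initial state, empty buffers. -/
def DM.gInit {ι S M : Type} (D : DM ι S M) : ι → S × List M :=
  fun i => (D.init i, [])

/-- Observation of process `πᵢ`: its own local state and input buffer. -/
def DM.obs {ι S M : Type} (_ : DM ι S M) (i : ι) (q : ι → S × List M) : S × List M :=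
  q i

/-- Implicit security policy flow relation: `πᵢ ⤳ πⱼ` iff `i = j` or some
message sent by `πᵢ` is received by `πⱼ`. -/
def DM.iflows {ι S M : Type} (D : DM ι S M) (i j : ι) : Prop :=
  i = j ∨ ∃ m : M, D.sender m = i ∧ D.isInput j m = true

/-- Purge w.r.t. the implicit (filterless) security policy: keep exactly the
actions whose domain flows to `πᵢ`. -/
noncomputable def DM.ipurge {ι S M : Type} (D : DM ι S M) (i : ι)
    (α : List (Act ι M)) : List (Act ι M) :=
  α.filter (fun a => decide (D.iflows (D.dom a) i))

/-!
Each process's observation evolves by a local transition that depends only on its own component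
and the action performed, and an action whose domain does not flow to `πᵢ` leaves `πᵢ`'s
component untouched. So along any execution, the final observation of `πᵢ` is its initial one
folded with its local transition over the purged execution; equal purges from the same initial
state thus give equal observations.
-/

namespace DM

variable {ι S M : Type} (D : DM ι S M)

/-- A reception removes the first consumable message of the buffer, which `GStep.recv`
guarantees to be the received one. -/
noncomputable def localStep (i : ι) : Act ι M → S × List M → S × List M
  | .send m, (s, buf) =>
      (if i = D.sender m then (D.stepL i s (.send m)).getD s else s,
       if D.isInput i m then buf ++ [m] else buf)
  | .recv j m, (s, buf) =>
      if j = i then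
        ((D.stepL i s (.recv i m)).getD s, buf.eraseP fun b => (D.stepL i s (.recv i b)).isSome)
      else (s, buf)

variable {D}

theorem GStep.apply_eq_localStep {q q' : ι → S × List M} {a : Act ι M} (h : D.GStep q a q')
    (i : ι) : q' i = D.localStep i a (q i) := by
  cases h with
  | send m s' hs =>
    by_cases hi : i = D.sender m
    · subst hi
      simp [localStep, hs]
    · simp [localStep, hi]
  | recv j m s' α₁ α₂ _ hbuf hfirst hs =>
    by_cases hj : j = i
    · subst hj
      have hbuf' :
          ((q j).2.eraseP fun b => (D.stepL j (q j).1 (.recv j b)).isSome) = α₁ ++ α₂ := by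
        rw [hbuf, List.eraseP_append_right _ fun b hb => by simp [hfirst b hb],
          List.eraseP_cons_of_pos (by simp [hs])]
      simp [localStep, hs, hbuf']
    · simp [localStep, Function.update_of_ne (Ne.symm hj), hj]

theorem GStep.apply_eq_of_not_iflows {q q' : ι → S × List M} {a : Act ι M} (h : D.GStep q a q')
    {i : ι} (hflow : ¬ D.iflows (D.dom a) i) : q' i = q i := by
  cases h with
  | send m =>
    have hi : i ≠ D.sender m := fun hi => hflow (.inl hi.symm)
    have hinput : D.isInput i m = false := by
      simpa using fun hm => hflow (.inr ⟨m, rfl, hm⟩)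
    simp [hi, hinput]
  | recv j m _ _ _ hin =>
    have hj : j ≠ i := by
      rintro rfl
      exact hflow (.inr ⟨m, rfl, hin⟩)
    exact Function.update_of_ne hj.symm _ _

theorem Run.apply_eq_foldl_ipurge {q q' : ι → S × List M} {α : List (Act ι M)}
    (h : D.Run q α q') (i : ι) :
    q' i = (D.ipurge i α).foldl (fun c a => D.localStep i a c) (q i) := by
  induction h with
  | nil q => rfl
  | @cons q q' q'' a α hstep _ ih =>
    by_cases hflow : D.iflows (D.dom a) i
    · rw [ih, hstep.apply_eq_localStep i]
      simp [ipurge, hflow]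
    · rw [ih, hstep.apply_eq_of_not_iflows hflow]
      simp [ipurge, hflow]

end DM

/-- a distributed machine complies with its implicit security
policy: for every process `πᵢ` and all global executions `α, β`, equal purges
(w.r.t. the implicit policy) imply equal observations. -/
theorem implicit_compliance {ι S M : Type} (D : DM ι S M)
    (i : ι) (α β : List (Act ι M)) (qα qβ : ι → S × List M)
    (hα : D.Run D.gInit α qα) (hβ : D.Run D.gInit β qβ)
    (h : D.ipurge i α = D.ipurge i β) :
    D.obs i qα = D.obs i qβ := by
  rw [DM.obs, DM.obs, hα.apply_eq_foldl_ipurge i, hβ.apply_eq_foldl_ipurge i, h]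
end

section
/- Step consistency of the componentwise unwinding relation: for a distributed machine, if q ∼_{π_i} r (i.e., q_i = r_i) and action a (a send !m or receive ?_{π_j} m) is executable from both q and r, then step(q, a) ∼_{π_i} step(r, a). -/
open scoped Classical

/- A step changes the `i`-th component only as a function of that component and the action.
For a reception this needs the consumed occurrence to be determined by the buffer: it is the
first consumable message, so the buffer splits around it in only one way. -/

theorem List.takeWhile_append_cons_of_forall_not {α : Type*} {p : α → Prop} {l₁ l₂ : List α}
    {a : α} (hl : ∀ b ∈ l₁, ¬ p b) (ha : p a) :
    (l₁ ++ a :: l₂).takeWhile (fun b => !decide (p b)) = l₁ := by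
  rw [List.takeWhile_append_of_pos (by simpa using hl), List.takeWhile_cons_of_neg (by simpa),
    List.append_nil]

theorem List.append_cons_inj_of_forall_not {α : Type*} {p : α → Prop} {l₁ l₂ r₁ r₂ : List α}
    {a b : α} (h : l₁ ++ a :: l₂ = r₁ ++ b :: r₂) (hl : ∀ c ∈ l₁, ¬ p c) (ha : p a)
    (hr : ∀ c ∈ r₁, ¬ p c) (hb : p b) :
    l₁ = r₁ ∧ a = b ∧ l₂ = r₂ := by
  have hlr : l₁ = r₁ := by
    rw [← List.takeWhile_append_cons_of_forall_not hl ha (l₂ := l₂), h,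
      List.takeWhile_append_cons_of_forall_not hr hb]
  subst hlr
  simpa using List.append_cancel_left h

/-- step consistency of the componentwise unwinding relation:
if `q i = r i` and the action `a` is executable from both `q` and `r`, then
the successor states again agree on the `i`-th component. -/
theorem step_consistency {ι S M : Type} (D : DM ι S M)
    (i : ι) (q r q' r' : ι → S × List M) (a : Act ι M)
    (h : q i = r i)
    (hq : D.GStep q a q') (hr : D.GStep r a r') :
    q' i = r' i := by
  cases hq with
  | send m s' hs =>
    cases hr with
    | send _ s'' hs' =>
      by_cases hi : i = D.sender m
      · subst hi
        obtain rfl : s' = s'' := Option.some.inj (hs.symm.trans (h ▸ hs'))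
        simp [h]
      · simp [hi, h]
  | recv j m s' α₁ α₂ _ hbuf hfirst hs =>
    cases hr with
    | recv _ _ s'' β₁ β₂ _ hbuf' hfirst' hs' =>
      by_cases hi : i = j
      · subst hi
        rw [h] at hbuf hfirst hs
        obtain ⟨rfl, -, rfl⟩ := List.append_cons_inj_of_forall_not
          (p := fun b => D.stepL i (r i).1 (.recv i b) ≠ none) (hbuf.symm.trans hbuf')
          (fun b hb => not_not.mpr (hfirst b hb)) (by simp [hs])
          (fun b hb => not_not.mpr (hfirst' b hb)) (by simp [hs'])
        obtain rfl : s' = s'' := Option.some.inj (hs.symm.trans hs')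
        simp
      · simp [Function.update_of_ne hi, h]
end

section
/- In a distributed machine, the local state and buffer of process π_i after a global execution α is determined by the subsequence of α consisting of actions a with dom(a) ⤳ π_i in the implicit policy: if two executions α, β agree on this subsequence, then the i-th components of s⁰·α and s⁰·β are equal. -/
open scoped Classical

/-!
The `i`-th component of the global state evolves autonomously: an action whose domain does not
flow to `πᵢ` leaves it untouched, and an action whose domain does flow to `πᵢ` changes it in a way
that depends only on the component itself (a reception consumes the *first* unconsumable occurrence
of its message, which is determined by the buffer and the local state). Induction along the common
purge of the two executions then shows that both end with the same `i`-th component.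
-/

theorem List.takeWhile_append_cons_of_neg {α : Type*} {p : α → Bool} {l₁ l₂ : List α} {x : α}
    (h₁ : ∀ b ∈ l₁, p b) (hx : ¬ p x) : (l₁ ++ x :: l₂).takeWhile p = l₁ := by
  simp [List.takeWhile_append_of_pos h₁, hx]

namespace DM

variable {ι S M : Type} (D : DM ι S M)

theorem run_append_iff {q q'' : ι → S × List M} {α β : List (Act ι M)} :
    D.Run q (α ++ β) q'' ↔ ∃ q', D.Run q α q' ∧ D.Run q' β q'' := by
  induction α generalizing q with
  | nil => exact ⟨fun h => ⟨q, .nil q, h⟩, fun ⟨_, .nil _, h⟩ => h⟩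
  | cons a α ih =>
    constructor
    · rintro (_ | ⟨hstep, hrun⟩)
      obtain ⟨q', hα, hβ⟩ := ih.1 hrun
      exact ⟨q', .cons hstep hα, hβ⟩
    · rintro ⟨q', _ | ⟨hstep, hα⟩, hβ⟩
      exact .cons hstep (ih.2 ⟨q', hα, hβ⟩)

variable (i : ι)

theorem gstep_apply_eq_of_not_iflows {q q' : ι → S × List M} {a : Act ι M}
    (h : D.GStep q a q') (hn : ¬ D.iflows (D.dom a) i) : q' i = q i := by
  cases h with
  | send m s' hs =>
    have hsender : i ≠ D.sender m := fun e => hn (Or.inl e.symm)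
    have hinput : D.isInput i m = false := by
      simpa using fun e => hn (Or.inr ⟨m, rfl, e⟩)
    simp [hsender, hinput]
  | recv j m _ _ _ hin =>
    have hj : i ≠ j := fun e => hn (Or.inr ⟨m, rfl, e ▸ hin⟩)
    exact Function.update_of_ne hj _ _

theorem run_apply_eq_of_forall_not_iflows {q q' : ι → S × List M} {α : List (Act ι M)}
    (h : D.Run q α q') (hα : ∀ a ∈ α, ¬ D.iflows (D.dom a) i) : q' i = q i := by
  induction h with
  | nil => rfl
  | cons hstep _ ih =>
    rw [ih fun a ha => hα a (List.mem_cons_of_mem _ ha),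
      D.gstep_apply_eq_of_not_iflows i hstep (hα _ List.mem_cons_self)]

theorem gstep_apply_congr {q r q' r' : ι → S × List M} {a : Act ι M}
    (hq : D.GStep q a q') (hr : D.GStep r a r') (h : q i = r i) : q' i = r' i := by
  cases hq with
  | send m s' hs =>
    cases hr with
    | send _ s'' hs' =>
      by_cases hi : i = D.sender m
      · subst hi
        rw [h, hs', Option.some.injEq] at hs
        simp [hs, h]
      · simp [hi, h]
  | recv j m s' α₁ α₂ _ hbuf hfirst hs =>
    cases hr with
    | recv _ _ s'' β₁ β₂ _ hbuf' hfirst' hs' =>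
      by_cases hj : j = i
      · subst hj
        rw [h] at hs hfirst
        have hbuf_eq : α₁ ++ m :: α₂ = β₁ ++ m :: β₂ := by rw [← hbuf, h, hbuf']
        -- both prefixes are the longest run of messages that the local state cannot consume
        set unconsumable := fun b => (D.stepL j (r j).1 (.recv j b)).isNone
        have hm : ¬ unconsumable m := by simp [unconsumable, hs]
        have hα₁ : α₁ = (α₁ ++ m :: α₂).takeWhile unconsumable :=
          (List.takeWhile_append_cons_of_neg (by simpa [unconsumable] using hfirst) hm).symm
        have hβ₁ : β₁ = (β₁ ++ m :: β₂).takeWhile unconsumable :=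
          (List.takeWhile_append_cons_of_neg (by simpa [unconsumable] using hfirst') hm).symm
        obtain rfl : α₁ = β₁ := by rw [hα₁, hβ₁, hbuf_eq]
        obtain rfl : α₂ = β₂ := by simpa using hbuf_eq
        rw [hs', Option.some.injEq] at hs
        simp [hs]
      · simp [Function.update_of_ne (Ne.symm hj), h]

theorem run_apply_congr_of_ipurge_eq {q r qα rβ : ι → S × List M} {α β : List (Act ι M)}
    (hα : D.Run q α qα) (hβ : D.Run r β rβ) (h : q i = r i)
    (hpurge : D.ipurge i α = D.ipurge i β) : qα i = rβ i := by
  generalize hγ : D.ipurge i β = γ at hpurge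
  induction γ generalizing α β q r with
  | nil =>
    simp only [ipurge, List.filter_eq_nil_iff, decide_eq_true_eq] at hpurge hγ
    rw [D.run_apply_eq_of_forall_not_iflows i hα hpurge,
      D.run_apply_eq_of_forall_not_iflows i hβ hγ, h]
  | cons c γ ih =>
    simp only [ipurge, List.filter_eq_cons_iff, decide_eq_true_eq] at hpurge hγ
    obtain ⟨α₀, α₁, rfl, hα₀, -, hα₁⟩ := hpurge
    obtain ⟨β₀, β₁, rfl, hβ₀, -, hβ₁⟩ := hγ
    obtain ⟨q₀, hqα₀, _ | ⟨hqc, hqα₁⟩⟩ := (D.run_append_iff).1 hα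
    obtain ⟨r₀, hrβ₀, _ | ⟨hrc, hrβ₁⟩⟩ := (D.run_append_iff).1 hβ
    have h₀ : q₀ i = r₀ i := by
      rw [D.run_apply_eq_of_forall_not_iflows i hqα₀ hα₀,
        D.run_apply_eq_of_forall_not_iflows i hrβ₀ hβ₀, h]
    exact ih hqα₁ hrβ₁ (D.gstep_apply_congr i hqc hrc h₀) (hpurge := hα₁) (hγ := hβ₁)

end DM

/-- the local state and buffer of process `πᵢ` after a global
execution is determined by the subsequence of actions `a` with
`dom a ⤳ πᵢ` in the implicit policy. -/
theorem local_state_determined {ι S M : Type} (D : DM ι S M)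
    (i : ι) (α β : List (Act ι M)) (qα qβ : ι → S × List M)
    (hα : D.Run D.gInit α qα) (hβ : D.Run D.gInit β qβ)
    (h : α.filter (fun a => decide (D.iflows (D.dom a) i))
       = β.filter (fun a => decide (D.iflows (D.dom a) i))) :
    qα i = qβ i :=
  D.run_apply_congr_of_ipurge_eq i hα hβ rfl h
end

section
/- For the Starlight switch filter function f defined by f(α·a) = (a = !cmdL) ∧ (number of ?toggle actions in α is odd), the switch process S satisfies local filter respect: for every local execution δ of S and action a with ¬f(δ·a), either a ≠ !cmdL (hence not an input of the low network L) or !cmdL is not executable from the state reached by δ. -/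
/-- States of the Starlight switch process. -/
inductive SwState : Type
  | h | hr | hc | l | lr | lc
  deriving DecidableEq

/-- Actions of the Starlight switch process: receive actions `cmd`, `toggle`,
`res` and send actions `cmdL`, `cmdH`, `display`. -/
inductive SwAct : Type
  | cmd | toggle | res | cmdL | cmdH | display
  deriving DecidableEq

/-- Partial transition function of the switch process. -/
def swStep : SwState → SwAct → Option SwState
  | .h, .toggle => some .l
  | .l, .toggle => some .h
  | .h, .res => some .hr
  | .hr, .display => some .h
  | .h, .cmd => some .hc
  | .hc, .cmdH => some .h
  | .l, .res => some .lr
  | .lr, .display => some .l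
  | .l, .cmd => some .lc
  | .lc, .cmdL => some .l
  | _, _ => none

/-- State reached by executing a sequence of actions (`none` if the sequence
is not a valid local execution). -/
def swRun : SwState → List SwAct → Option SwState
  | s, [] => some s
  | s, a :: rest => (swStep s a).bind (fun s' => swRun s' rest)

/-- The Starlight filter function: `f(α·a)` holds iff `a = !cmdL` and the
number of `?toggle` actions in `α` is odd. -/
def swFilter (l : List SwAct) : Bool :=
  (l.getLast? = some SwAct.cmdL) && (l.dropLast.count SwAct.toggle % 2 == 1)

/-! The switch is in the `ℓ`-row exactly when it has executed an odd number of `?toggle`s, since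
only `?toggle` moves between the rows. As `!cmdL` is executable only in `ℓc`, executing it after
`δ` forces an odd toggle count in `δ`, which is `f(δ·!cmdL)`. -/

def swLow : SwState → Bool
  | .l | .lr | .lc => true
  | _ => false

lemma swLow_of_swStep {s s' : SwState} {a : SwAct} (h : swStep s a = some s') :
    swLow s' = (swLow s ^^ decide (a = .toggle)) := by
  cases s <;> cases a <;> simp only [swStep, Option.some.injEq, reduceCtorEq] at h <;>
    subst h <;> rfl

lemma swLow_of_swRun {s₀ s : SwState} {δ : List SwAct} (h : swRun s₀ δ = some s) :
    swLow s = (swLow s₀ ^^ (δ.count .toggle).bodd) := by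
  induction δ generalizing s₀ with
  | nil => simp_all [swRun]
  | cons a δ ih =>
    obtain ⟨s₁, hstep, hrun⟩ := Option.bind_eq_some_iff.mp h
    rw [ih hrun, swLow_of_swStep hstep, List.count_cons]
    by_cases ha : a = .toggle <;> simp [ha]

lemma swLow_of_swRun_h {s : SwState} {δ : List SwAct} (h : swRun .h δ = some s) :
    swLow s = (δ.count .toggle).bodd := by
  simpa [swLow] using swLow_of_swRun h

lemma swLow_of_swStep_cmdL_ne_none {s : SwState} (h : swStep s .cmdL ≠ none) :
    swLow s = true := by
  cases s <;> simp_all [swStep, swLow]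

lemma swFilter_append_singleton (δ : List SwAct) (a : SwAct) :
    swFilter (δ ++ [a]) = (decide (a = .cmdL) && (δ.count .toggle).bodd) := by
  simp [swFilter, Nat.mod_two_of_bodd]

/-- the switch process satisfies local filter respect for the
Starlight filter: for every local execution `δ` and action `a` with
`¬f(δ·a)`, either `a ≠ !cmdL` (hence not an input of the low network) or
`!cmdL` is not executable from the state reached by `δ`. -/
theorem starlight_local_filter_respect
    (δ : List SwAct) (s : SwState) (a : SwAct)
    (hδ : swRun SwState.h δ = some s)
    (hf : swFilter (δ ++ [a]) = false) :
    a ≠ SwAct.cmdL ∨ swStep s SwAct.cmdL = none := by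
  rw [or_iff_not_imp_left, not_not]
  rintro rfl
  by_contra hexec
  have hodd : (δ.count .toggle).bodd = true :=
    (swLow_of_swRun_h hδ).symm.trans (swLow_of_swStep_cmdL_ne_none hexec)
  simp [swFilter_append_singleton, hodd] at hf
end

section
/- In the Starlight switch process, the action !cmdL only occurs after an odd number of ?toggle receptions: for every local execution δ·(!cmdL) of S, the number of ?toggle actions in δ is odd. -/
/-! Every transition stays in its row except `?toggle`, which switches rows, so the row of the
reached state is the parity of the number of toggles; `!cmdL` is only enabled in `lc`, on the
ℓ-row. -/

def SwState.row : SwState → ZMod 2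
  | .h | .hr | .hc => 0
  | .l | .lr | .lc => 1

lemma swRun_append (s : SwState) (α β : List SwAct) :
    swRun s (α ++ β) = (swRun s α).bind fun t => swRun t β := by
  induction α generalizing s with
  | nil => rfl
  | cons a α ih =>
    simp only [List.cons_append, swRun, Option.bind_assoc, ih]

lemma swRun_singleton (s : SwState) (a : SwAct) : swRun s [a] = swStep s a := by
  simp [swRun]

lemma row_of_swStep {s t : SwState} {a : SwAct} (h : swStep s a = some t) :
    t.row = s.row + if a = .toggle then 1 else 0 := by
  cases s <;> cases a <;> simp only [swStep, reduceCtorEq, Option.some.injEq] at h <;>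
    subst h <;> decide

lemma row_of_swRun {s t : SwState} {δ : List SwAct} (h : swRun s δ = some t) :
    t.row = s.row + δ.count .toggle := by
  induction δ generalizing s with
  | nil =>
    simp only [swRun, Option.some.injEq] at h
    simp [h]
  | cons a δ ih =>
    obtain ⟨u, hstep, hrun⟩ := Option.bind_eq_some_iff.mp h
    rw [ih hrun, row_of_swStep hstep, List.count_cons]
    simp only [beq_iff_eq]
    split_ifs <;> push_cast <;> ring

lemma eq_lc_of_swStep_cmdL {s t : SwState} (h : swStep s .cmdL = some t) : s = .lc := by
  cases s <;> simp_all [swStep]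

/-- in the Starlight switch, `!cmdL` occurs only after an odd
number of `?toggle` receptions: for every local execution `δ·(!cmdL)`, the
number of `?toggle` actions in `δ` is odd. -/
theorem starlight_cmdL_odd_toggles (δ : List SwAct) (s : SwState)
    (h : swRun SwState.h (δ ++ [SwAct.cmdL]) = some s) :
    Odd (δ.count SwAct.toggle) := by
  rw [swRun_append] at h
  obtain ⟨t, hδ, hcmdL⟩ := Option.bind_eq_some_iff.mp h
  rw [swRun_singleton] at hcmdL
  have hrow := row_of_swRun hδ
  rw [eq_lc_of_swStep_cmdL hcmdL] at hrow
  simpa [SwState.row, ZMod.natCast_eq_one_iff_odd] using hrow.symm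
end
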